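/- For the sets A_{2l} and B_{2l} from the construction with parameter l (which satisfy A_{2l} ∪ B_{2l} = [0, 2^{2l+1}−2] and A_{2l} ∩ B_{2l} = {2^{2l}−1}), one has R_{A_{2l}} = R_{B_{2l}}; i.e., there exist finite sets A, B covering an initial interval, intersecting in exactly one point, which have identical representation functions. -/

import Mathlib

/-!
Suppose `R A = R B` and every element of `A` is smaller than every element of `m + B`, and every
element of `B` smaller than every element of `m + A`. Then `A ∪ (m + B)` and `B ∪ (m + A)` again
have the same representation function: a representation of `n` lies inside `A`, inside `m + B`,
or is a cross term `a + (m + b)`, and `(a, m + b) ↦ (b, m + a)` matches the cross terms of the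
two sides. Up to step `2l - 1` the shifts are `m_i = 2^(i+1)`, the sets split `[0, 2^(i+1))` and
separation is clear. The last shift `2^(2l) - 1` is one smaller, but separation survives because
`0 ∉ B` and the top element `2^(2l) - 1` lies in `A`, not in `B` (its binary digit sum is even).
-/

/-- Representation function: number of unordered representations of `n`
as `s' + s''` with `s' < s''`, both in `S`. -/
noncomputable def R (S : Set ℕ) (n : ℕ) : ℕ :=
  {p : ℕ × ℕ | p.1 ∈ S ∧ p.2 ∈ S ∧ p.1 < p.2 ∧ p.1 + p.2 = n}.ncard

/-- Translate of a set: `m + S`. -/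
def tr (m : ℕ) (S : Set ℕ) : Set ℕ := (m + ·) '' S


/-- Iterated construction: `A_{i+1} = A_i ∪ (m_i + B_i)`, `B_{i+1} = B_i ∪ (m_i + A_i)`. -/
def AB (A0 B0 : Set ℕ) (m : ℕ → ℕ) : ℕ → Set ℕ × Set ℕ
  | 0 => (A0, B0)
  | i + 1 => ((AB A0 B0 m i).1 ∪ tr (m i) (AB A0 B0 m i).2,
              (AB A0 B0 m i).2 ∪ tr (m i) (AB A0 B0 m i).1)


/-- The sequence `m_i` from the paper, with parameter `l`. -/
def mseq (l i : ℕ) : ℕ :=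
  if i ≤ 2*l - 2 then 2^(i+1)
  else if i = 2*l - 1 then 2^(2*l) - 1
  else 2^(i+1) - 2^(i - 2*l)

open Set

lemma mem_tr {m x : ℕ} {S : Set ℕ} : x ∈ tr m S ↔ ∃ y ∈ S, m + y = x := Iff.rfl

lemma add_mem_tr_iff {m x : ℕ} {S : Set ℕ} : m + x ∈ tr m S ↔ x ∈ S := by
  simp [tr]

lemma add_mem_union_tr_iff {m x : ℕ} {S T : Set ℕ} (hT : T ⊆ Iio m) :
    m + x ∈ T ∪ tr m S ↔ x ∈ S := by
  rw [mem_union, add_mem_tr_iff, or_iff_right]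
  exact fun h => (hT h).out.not_ge (Nat.le_add_right m x)

lemma union_tr_subset_Iio {m k : ℕ} {S T : Set ℕ} (hT : T ⊆ Iio m) (hS : S ⊆ Iio k) :
    T ∪ tr m S ⊆ Iio (m + k) := by
  rintro x (hx | ⟨y, hy, rfl⟩)
  · exact (hT hx).out.trans_le (Nat.le_add_right m k)
  · exact Nat.add_lt_add_left (hS hy).out m

def repPairs (S : Set ℕ) (n : ℕ) : Set (ℕ × ℕ) :=
  {p | p.1 ∈ S ∧ p.2 ∈ S ∧ p.1 < p.2 ∧ p.1 + p.2 = n}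

def crossPairs (X Y : Set ℕ) (n : ℕ) : Set (ℕ × ℕ) :=
  {p | p.1 ∈ X ∧ p.2 ∈ Y ∧ p.1 + p.2 = n}

lemma R_eq_ncard_repPairs (S : Set ℕ) (n : ℕ) : R S n = (repPairs S n).ncard := rfl

lemma crossPairs_finite (X Y : Set ℕ) (n : ℕ) : (crossPairs X Y n).Finite := by
  refine ((finite_Iic n).prod (finite_Iic n)).subset ?_
  rintro ⟨a, b⟩ ⟨-, -, h⟩
  exact ⟨mem_Iic.2 (by omega), mem_Iic.2 (by omega)⟩

lemma repPairs_finite (S : Set ℕ) (n : ℕ) : (repPairs S n).Finite :=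
  (crossPairs_finite S S n).subset fun _ ⟨h1, h2, _, h4⟩ => ⟨h1, h2, h4⟩

lemma R_singleton (a n : ℕ) : R {a} n = 0 := by
  rw [R_eq_ncard_repPairs, ncard_eq_zero (repPairs_finite _ _), eq_empty_iff_forall_notMem]
  rintro ⟨x, y⟩ ⟨hx, hy, hlt, -⟩
  rw [mem_singleton_iff] at hx hy
  exact hlt.ne (hx.trans hy.symm)

lemma R_union_of_forall_lt {X Y : Set ℕ} (hXY : ∀ x ∈ X, ∀ y ∈ Y, x < y) (n : ℕ) :
    R (X ∪ Y) n = R X n + R Y n + (crossPairs X Y n).ncard := by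
  have hne : ∀ x ∈ X, x ∉ Y := fun x hx hy => (hXY x hx x hy).false
  have hsplit : repPairs (X ∪ Y) n = (repPairs X n ∪ repPairs Y n) ∪ crossPairs X Y n := by
    ext ⟨a, b⟩
    constructor
    · rintro ⟨ha | ha, hb | hb, hlt, hs⟩
      · exact Or.inl (Or.inl ⟨ha, hb, hlt, hs⟩)
      · exact Or.inr ⟨ha, hb, hs⟩
      · exact absurd (hXY b hb a ha) (by omega)
      · exact Or.inl (Or.inr ⟨ha, hb, hlt, hs⟩)
    · rintro ((⟨ha, hb, hlt, hs⟩ | ⟨ha, hb, hlt, hs⟩) | ⟨ha, hb, hs⟩)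
      · exact ⟨Or.inl ha, Or.inl hb, hlt, hs⟩
      · exact ⟨Or.inr ha, Or.inr hb, hlt, hs⟩
      · exact ⟨Or.inl ha, Or.inr hb, hXY a ha b hb, hs⟩
  have hXY_disj : Disjoint (repPairs X n) (repPairs Y n) :=
    disjoint_left.2 fun p hX hY => hne p.1 hX.1 hY.1
  have hcross_disj : Disjoint (repPairs X n ∪ repPairs Y n) (crossPairs X Y n) := by
    refine disjoint_left.2 fun p hp hc => ?_
    rcases hp with hp | hp
    · exact hne p.2 hp.2.1 hc.2.1
    · exact hne p.1 hc.1 hp.1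
  rw [R_eq_ncard_repPairs, hsplit,
    ncard_union_eq hcross_disj ((repPairs_finite _ _).union (repPairs_finite _ _))
      (crossPairs_finite _ _ _),
    ncard_union_eq hXY_disj (repPairs_finite _ _) (repPairs_finite _ _)]
  rfl

lemma ncard_crossPairs_tr_le (A B : Set ℕ) (m n : ℕ) :
    (crossPairs A (tr m B) n).ncard ≤ (crossPairs B (tr m A) n).ncard := by
  refine ncard_le_ncard_of_injOn (fun p => (p.2 - m, m + p.1)) ?_ ?_ (crossPairs_finite _ _ _)
  · rintro ⟨a, t⟩ ⟨ha, ht, hs⟩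
    obtain ⟨b, hb, rfl⟩ := mem_tr.1 ht
    refine ⟨by simpa using hb, add_mem_tr_iff.2 ha, ?_⟩
    simp only at hs ⊢
    omega
  · rintro ⟨a, t⟩ ⟨-, ht, -⟩ ⟨a', t'⟩ ⟨-, ht', -⟩ h
    obtain ⟨b, -, rfl⟩ := mem_tr.1 ht
    obtain ⟨b', -, rfl⟩ := mem_tr.1 ht'
    simp only [Prod.mk.injEq] at h ⊢
    omega

lemma ncard_crossPairs_tr_comm (A B : Set ℕ) (m n : ℕ) :
    (crossPairs A (tr m B) n).ncard = (crossPairs B (tr m A) n).ncard :=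
  (ncard_crossPairs_tr_le A B m n).antisymm (ncard_crossPairs_tr_le B A m n)

lemma R_tr_add (S : Set ℕ) (m n : ℕ) : R (tr m S) (n + 2 * m) = R S n := by
  have himage : repPairs (tr m S) (n + 2 * m) = (fun p => (m + p.1, m + p.2)) '' repPairs S n := by
    ext ⟨x, y⟩
    constructor
    · rintro ⟨hx, hy, hlt, hs⟩
      obtain ⟨a, ha, rfl⟩ := mem_tr.1 hx
      obtain ⟨b, hb, rfl⟩ := mem_tr.1 hy
      exact ⟨(a, b), ⟨ha, hb, by omega, by omega⟩, rfl⟩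
    · rintro ⟨⟨a, b⟩, ⟨ha, hb, hlt, hs⟩, h⟩
      simp only [Prod.mk.injEq] at h
      obtain ⟨rfl, rfl⟩ := h
      exact ⟨add_mem_tr_iff.2 ha, add_mem_tr_iff.2 hb, by omega, by omega⟩
  have hinj : Function.Injective fun p : ℕ × ℕ => (m + p.1, m + p.2) := fun p q h => by
    simp only [Prod.mk.injEq, Nat.add_left_cancel_iff] at h
    exact Prod.ext h.1 h.2
  rw [R_eq_ncard_repPairs, himage, ncard_image_of_injective _ hinj]
  rfl

lemma R_tr_of_lt (S : Set ℕ) {m n : ℕ} (h : n < 2 * m) : R (tr m S) n = 0 := by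
  rw [R_eq_ncard_repPairs, ncard_eq_zero (repPairs_finite _ _), eq_empty_iff_forall_notMem]
  rintro ⟨x, y⟩ ⟨hx, hy, -, hs⟩
  obtain ⟨a, -, rfl⟩ := mem_tr.1 hx
  obtain ⟨b, -, rfl⟩ := mem_tr.1 hy
  omega

lemma R_tr_congr {S T : Set ℕ} (hST : R S = R T) (m : ℕ) : R (tr m S) = R (tr m T) := by
  funext n
  rcases lt_or_ge n (2 * m) with h | h
  · rw [R_tr_of_lt S h, R_tr_of_lt T h]
  · obtain ⟨k, rfl⟩ := Nat.exists_eq_add_of_le' h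
    rw [R_tr_add, R_tr_add, hST]

theorem R_union_tr_eq {A B : Set ℕ} {m : ℕ} (hAB : ∀ a ∈ A, ∀ b ∈ B, a < m + b)
    (hBA : ∀ b ∈ B, ∀ a ∈ A, b < m + a) (hR : R A = R B) :
    R (A ∪ tr m B) = R (B ∪ tr m A) := by
  have hsep {X Y : Set ℕ} (h : ∀ x ∈ X, ∀ y ∈ Y, x < m + y) :
      ∀ x ∈ X, ∀ z ∈ tr m Y, x < z := by
    rintro x hx _ ⟨y, hy, rfl⟩
    exact h x hx y hy
  funext n
  rw [R_union_of_forall_lt (hsep hAB), R_union_of_forall_lt (hsep hBA),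
    ncard_crossPairs_tr_comm, R_tr_congr hR.symm, hR]

lemma AB_congr (A₀ B₀ : Set ℕ) {m m' : ℕ → ℕ} {i : ℕ} (h : ∀ j < i, m j = m' j) :
    AB A₀ B₀ m i = AB A₀ B₀ m' i := by
  induction i with
  | zero => rfl
  | succ i ih =>
    simp only [AB, ih fun j hj => h j (Nat.lt_succ_of_lt hj), h i (Nat.lt_succ_self i)]

/-- The numbers below `2^(i+1)` with even, respectively odd, binary digit sum. -/
def thueMorse : ℕ → Set ℕ × Set ℕ := AB {0} {1} fun j => 2 ^ (j + 1)

namespace thueMorse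

lemma succ (i : ℕ) :
    thueMorse (i + 1) = ((thueMorse i).1 ∪ tr (2 ^ (i + 1)) (thueMorse i).2,
      (thueMorse i).2 ∪ tr (2 ^ (i + 1)) (thueMorse i).1) := rfl

lemma subset_Iio (i : ℕ) :
    (thueMorse i).1 ⊆ Iio (2 ^ (i + 1)) ∧ (thueMorse i).2 ⊆ Iio (2 ^ (i + 1)) := by
  induction i with
  | zero => simp [thueMorse, AB]
  | succ i ih =>
    rw [succ, pow_succ 2 (i + 1), mul_two]
    exact ⟨union_tr_subset_Iio ih.1 ih.2, union_tr_subset_Iio ih.2 ih.1⟩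

lemma zero_notMem_snd (i : ℕ) : 0 ∉ (thueMorse i).2 := by
  induction i with
  | zero => simp [thueMorse, AB]
  | succ i ih =>
    rw [succ]
    rintro (h | ⟨a, -, ha⟩)
    · exact ih h
    · exact (Nat.two_pow_pos (i + 1)).ne' (Nat.eq_zero_of_add_eq_zero_right ha)

lemma top_mem_iff (i : ℕ) :
    (2 ^ (i + 1) - 1 ∈ (thueMorse i).1 ↔ Odd i) ∧
      (2 ^ (i + 1) - 1 ∈ (thueMorse i).2 ↔ Even i) := by
  induction i with
  | zero => simp [thueMorse, AB]
  | succ i ih =>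
    have htop : 2 ^ (i + 1 + 1) - 1 = 2 ^ (i + 1) + (2 ^ (i + 1) - 1) := by
      have := Nat.one_le_two_pow (n := i + 1)
      rw [pow_succ]
      omega
    rw [succ, htop, add_mem_union_tr_iff (subset_Iio i).1, add_mem_union_tr_iff (subset_Iio i).2,
      ih.1, ih.2]
    simp only [Nat.odd_add_one, Nat.even_add_one, Nat.not_odd_iff_even, Nat.not_even_iff_odd,
      iff_self, and_self]

lemma R_fst_eq_R_snd (i : ℕ) : R (thueMorse i).1 = R (thueMorse i).2 := by
  induction i with
  | zero => funext n; exact (R_singleton 0 n).trans (R_singleton 1 n).symm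
  | succ i ih =>
    obtain ⟨hA, hB⟩ := subset_Iio i
    exact R_union_tr_eq (fun a ha _ _ => (hA ha).out.trans_le (Nat.le_add_right _ _))
      (fun b hb _ _ => (hB hb).out.trans_le (Nat.le_add_right _ _)) ih

end thueMorse

lemma AB_mseq_eq_thueMorse {l i : ℕ} (hi : i ≤ 2 * l - 1) :
    AB {0} {1} (mseq l) i = thueMorse i :=
  AB_congr _ _ fun j hj => if_pos (by omega)

theorem stmt_19 (l : ℕ) (hl : 1 ≤ l) :
    R (AB {0} {1} (mseq l) (2 * l)).1 = R (AB {0} {1} (mseq l) (2 * l)).2 := by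
  obtain ⟨k, hk⟩ : ∃ k, 2 * l = k + 1 := ⟨2 * l - 1, by omega⟩
  have hm : mseq l k = 2 ^ (k + 1) - 1 := by
    rw [mseq, if_neg (by omega), if_pos (by omega), hk]
  have hodd : Odd k := ⟨l - 1, by omega⟩
  obtain ⟨hA, hB⟩ := thueMorse.subset_Iio k
  have h0 := thueMorse.zero_notMem_snd k
  have htop : 2 ^ (k + 1) - 1 ∉ (thueMorse k).2 := fun h =>
    Nat.not_even_iff_odd.2 hodd ((thueMorse.top_mem_iff k).2.1 h)
  simp only [hk, AB, hm, AB_mseq_eq_thueMorse (show k ≤ 2 * l - 1 by omega)]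
  refine R_union_tr_eq (fun a ha b hb => ?_) (fun b hb _ _ => ?_) (thueMorse.R_fst_eq_R_snd k)
  · have : b ≠ 0 := fun h => h0 (h ▸ hb)
    have := (hA ha).out
    omega
  · have : b ≠ 2 ^ (k + 1) - 1 := fun h => htop (h ▸ hb)
    have := (hB hb).out
    omega
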